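/- Extremality theorem (upper bound): any hierarchical clustering method H satisfying the Axioms of Value and Transformation produces ultrametrics bounded above by the reciprocal ultrametric: u_X(x,x') ≤ u^R_X(x,x') for all networks (X, A_X) and all x, x' ∈ X. -/

import Mathlib

/-!
Every link of a chain is bounded by its symmetrized dissimilarity: embed the two-node network
on `{a, b}` (with the dissimilarities of `a` and `b`) into `X`; the Axiom of Transformation
bounds `u_X(a, b)` by the two-node output, which the Axiom of Value computes as
`max (A a b) (A b a)`. The strong triangle inequality then bounds `u_X(x, x')` by the cost of
any chain from `x` to `x'`, hence by their infimum `u^R_X(x, x')`.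
-/

/-- Maximum dissimilarity over consecutive links of a chain (list of nodes). -/
def listCost {X : Type*} (A : X → X → ℝ) (l : List X) : ℝ :=
  (l.zip l.tail).foldr (fun p r => max (A p.1 p.2) r) 0

/-- Minimum over chains from `x` to `x'` of the maximum link cost. -/
noncomputable def minChainCost {X : Type*} (A : X → X → ℝ) (x x' : X) : ℝ :=
  sInf {c : ℝ | ∃ l : List X, l.head? = some x ∧ l.getLast? = some x' ∧ listCost A l = c}

/-- Symmetrized dissimilarity Ā. -/
def symDis {X : Type*} (A : X → X → ℝ) (x x' : X) : ℝ := max (A x x') (A x' x)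

/-- Reciprocal ultrametric. -/
noncomputable def uR {X : Type*} (A : X → X → ℝ) (x x' : X) : ℝ := minChainCost (symDis A) x x'

/-- Nonreciprocal ultrametric. -/
noncomputable def uNR {X : Type*} (A : X → X → ℝ) (x x' : X) : ℝ :=
  max (minChainCost A x x') (minChainCost A x' x)

/-- A (finite, asymmetric) network dissimilarity: nonnegative, vanishing exactly on the diagonal. -/
def IsNetwork {X : Type*} (A : X → X → ℝ) : Prop :=
  (∀ x x', 0 ≤ A x x') ∧ (∀ x x', A x x' = 0 ↔ x = x')

/-- Ultrametric: nonnegative, symmetric, identity of indiscernibles, strong triangle inequality. -/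
def IsUltra {X : Type*} (u : X → X → ℝ) : Prop :=
  (∀ x x', 0 ≤ u x x') ∧ (∀ x x', u x x' = u x' x) ∧
  (∀ x x', u x x' = 0 ↔ x = x') ∧
  (∀ x x' x'', u x x' ≤ max (u x x'') (u x'' x'))

abbrev ClusteringMethod : Type 1 := ∀ (X : Type) [Fintype X], (X → X → ℝ) → (X → X → ℝ)

def SatisfiesAxiomOfValue (H : ClusteringMethod) : Prop :=
  ∀ (X : Type) [Fintype X] (A : X → X → ℝ), IsNetwork A →
    ∀ p q : X, p ≠ q → (∀ x : X, x = p ∨ x = q) → H X A p q = max (A p q) (A q p)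

def SatisfiesAxiomOfTransformation (H : ClusteringMethod) : Prop :=
  ∀ (X Y : Type) [Fintype X] [Fintype Y] (A_X : X → X → ℝ) (A_Y : Y → Y → ℝ),
    IsNetwork A_X → IsNetwork A_Y → ∀ φ : X → Y, (∀ x x' : X, A_Y (φ x) (φ x') ≤ A_X x x') →
      ∀ x x' : X, H Y A_Y (φ x) (φ x') ≤ H X A_X x x'

theorem listCost_cons_cons {X : Type*} (A : X → X → ℝ) (a b : X) (l : List X) :
    listCost A (a :: b :: l) = max (A a b) (listCost A (b :: l)) :=
  rfl

theorem IsNetwork.comp_injective {X Y : Type*} {A : Y → Y → ℝ} (hA : IsNetwork A)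
    {f : X → Y} (hf : f.Injective) : IsNetwork fun x x' => A (f x) (f x') :=
  ⟨fun x x' => hA.1 (f x) (f x'), fun x x' => (hA.2 (f x) (f x')).trans hf.eq_iff⟩

section Chains

variable {X : Type*} {u B : X → X → ℝ}

theorem le_listCost_of_le (hdiag : ∀ x, u x x = 0)
    (htri : ∀ x x' x'', u x x' ≤ max (u x x'') (u x'' x'))
    (hle : ∀ x x', x ≠ x' → u x x' ≤ B x x') :
    ∀ (l : List X) (x x' : X), l.head? = some x → l.getLast? = some x' →
      u x x' ≤ listCost B l
  | [], _, _, hx, _ => by simp at hx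
  | [y], x, x', hx, hx' => by
    obtain rfl : y = x := by simpa using hx
    obtain rfl : y = x' := by simpa using hx'
    simp [hdiag, listCost]
  | y :: z :: l, x, x', hx, hx' => by
    obtain rfl : y = x := by simpa using hx
    have hx' : (z :: l).getLast? = some x' := by simpa [List.getLast?_cons_cons] using hx'
    have ih := le_listCost_of_le hdiag htri hle (z :: l) z x' rfl hx'
    rw [listCost_cons_cons]
    by_cases hyz : y = z
    · subst hyz
      exact ih.trans (le_max_right _ _)
    · exact (htri y x' z).trans (max_le_max (hle y z hyz) ih)

theorem le_minChainCost_of_le (hdiag : ∀ x, u x x = 0)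
    (htri : ∀ x x' x'', u x x' ≤ max (u x x'') (u x'' x'))
    (hle : ∀ x x', x ≠ x' → u x x' ≤ B x x') (x x' : X) : u x x' ≤ minChainCost B x x' := by
  refine le_csInf ⟨listCost B [x, x'], [x, x'], rfl, rfl, rfl⟩ ?_
  rintro c ⟨l, hx, hx', rfl⟩
  exact le_listCost_of_le hdiag htri hle l x x' hx hx'

end Chains

theorem le_symDis_of_ne {H : ClusteringMethod} (hValue : SatisfiesAxiomOfValue H)
    (hTransf : SatisfiesAxiomOfTransformation H) {X : Type} [Fintype X] {A : X → X → ℝ}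
    (hA : IsNetwork A) {a b : X} (hab : a ≠ b) : H X A a b ≤ symDis A a b := by
  set φ : Bool → X := fun z => cond z b a
  have hφ : φ.Injective := by
    intro z z'
    cases z <;> cases z' <;> simp [φ, hab, Ne.symm hab]
  have hpair := hA.comp_injective hφ
  calc H X A a b = H X A (φ false) (φ true) := rfl
    _ ≤ H Bool (fun z z' => A (φ z) (φ z')) false true :=
      hTransf Bool X _ A hpair hA φ (fun _ _ => le_rfl) false true
    _ = symDis A a b :=
      hValue Bool _ hpair false true Bool.false_ne_true (fun z => by cases z <;> simp)

theorem extremal_upper_bound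
    (H : ∀ (X : Type) [Fintype X], (X → X → ℝ) → (X → X → ℝ))
    (hUltra : ∀ (X : Type) [Fintype X] (A : X → X → ℝ), IsNetwork A → IsUltra (H X A))
    (hValue : ∀ (X : Type) [Fintype X] (A : X → X → ℝ), IsNetwork A →
      ∀ p q : X, p ≠ q → (∀ x : X, x = p ∨ x = q) →
        H X A p q = max (A p q) (A q p))
    (hTransf : ∀ (X Y : Type) [Fintype X] [Fintype Y]
        (A_X : X → X → ℝ) (A_Y : Y → Y → ℝ), IsNetwork A_X → IsNetwork A_Y →
      ∀ φ : X → Y, (∀ x x' : X, A_Y (φ x) (φ x') ≤ A_X x x') →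
        ∀ x x' : X, H Y A_Y (φ x) (φ x') ≤ H X A_X x x') :
    ∀ (X : Type) [Fintype X] (A : X → X → ℝ), IsNetwork A →
      ∀ x x' : X, H X A x x' ≤ uR A x x' := by
  intro X _ A hA
  obtain ⟨-, -, hzero, htri⟩ := hUltra X A hA
  exact le_minChainCost_of_le (fun x => (hzero x x).mpr rfl) htri
    (fun _ _ => le_symDis_of_ne hValue hTransf hA)
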